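/- For every n ≥ 2, the cardinality of F_{r²∖r}, the set of n-queens configurations fixed by the 180° rotation r² but not by the 90° rotation r, equals 4 times the number of orbits of the D₄-action contained in F_{r²∖r}; in particular every D₄-orbit of a configuration in F_{r²∖r} has exactly 4 elements and 4 divides |F_{r²∖r}|. -/
import Mathlib


open scoped Classical

/-- The `n × n` board, with squares indexed by `[n] × [n]` where `[n] = {1, …, n}`. -/
def board (n : ℕ) : Finset (ℕ × ℕ) := Finset.Icc 1 n ×ˢ Finset.Icc 1 n

/-- `Q` is an `n`-queens configuration: `Q ⊆ [n] × [n]`, `|Q| = n`, and every row,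
column, diagonal (`j - i + n = k`) and anti-diagonal (`i + j - 1 = k`) contains at
most one element of `Q`. -/
def IsQueensConfig (n : ℕ) (Q : Finset (ℕ × ℕ)) : Prop :=
  Q ⊆ board n ∧ Q.card = n ∧
  (∀ p ∈ Q, ∀ q ∈ Q, p.1 = q.1 → p = q) ∧
  (∀ p ∈ Q, ∀ q ∈ Q, p.2 = q.2 → p = q) ∧
  (∀ p ∈ Q, ∀ q ∈ Q, p.2 + n - p.1 = q.2 + n - q.1 → p = q) ∧
  (∀ p ∈ Q, ∀ q ∈ Q, p.1 + p.2 - 1 = q.1 + q.2 - 1 → p = q)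

/-- `Q(n)`: the number of `n`-queens configurations. -/
noncomputable def queensCount (n : ℕ) : ℕ :=
  ((board n).powerset.filter (fun Q => IsQueensConfig n Q)).card

/-- The vertical reflection `s`, `sQ = {(i, n+1-j) : (i,j) ∈ Q}`. -/
def sAct (n : ℕ) (Q : Finset (ℕ × ℕ)) : Finset (ℕ × ℕ) :=
  Q.image (fun p => (p.1, n + 1 - p.2))

/-- The 90° counter-clockwise rotation `r`, `rQ = {(n+1-j, i) : (i,j) ∈ Q}`. -/
def rAct (n : ℕ) (Q : Finset (ℕ × ℕ)) : Finset (ℕ × ℕ) :=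
  Q.image (fun p => (n + 1 - p.2, p.1))

/-- The dihedral group `D₄ = {r^k s^b : k ∈ Fin 4, b ∈ Bool}` acting on subsets of the
board; the element `(k, b)` acts by `Q ↦ r^k (s^b Q)` (rightmost map applied first). -/
def d4Act (n : ℕ) (x : Fin 4 × Bool) (Q : Finset (ℕ × ℕ)) : Finset (ℕ × ℕ) :=
  (rAct n)^[(x.1 : ℕ)] (if x.2 then sAct n Q else Q)

/-- The `D₄`-orbit of `Q`, i.e. `{xQ : x ∈ D₄}`. -/
def d4Orbit (n : ℕ) (Q : Finset (ℕ × ℕ)) : Finset (Finset (ℕ × ℕ)) :=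
  Finset.univ.image (fun x : Fin 4 × Bool => d4Act n x Q)

/-- `F_r`: the set of `n`-queens configurations fixed by the rotation `r`. -/
noncomputable def Fr (n : ℕ) : Finset (Finset (ℕ × ℕ)) :=
  (board n).powerset.filter (fun Q => IsQueensConfig n Q ∧ rAct n Q = Q)

/-- `F_{r² ∖ r}`: the `n`-queens configurations fixed by `r²` but not by `r`. -/
noncomputable def Fr2 (n : ℕ) : Finset (Finset (ℕ × ℕ)) :=
  (board n).powerset.filter
    (fun Q => IsQueensConfig n Q ∧ rAct n (rAct n Q) = Q ∧ rAct n Q ≠ Q)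

/-- `F_e`: the `n`-queens configurations fixed by no non-identity element of `D₄`. -/
noncomputable def Fe (n : ℕ) : Finset (Finset (ℕ × ℕ)) :=
  (board n).powerset.filter
    (fun Q => IsQueensConfig n Q ∧
      ∀ x : Fin 4 × Bool, x ≠ ((0 : Fin 4), false) → d4Act n x Q ≠ Q)

section Helpers

variable {n : ℕ} {Q : Finset (ℕ × ℕ)}

lemma mem_board' {p : ℕ × ℕ} :
    p ∈ board n ↔ 1 ≤ p.1 ∧ p.1 ≤ n ∧ 1 ≤ p.2 ∧ p.2 ≤ n := by
  simp [board, Finset.mem_Icc]; tauto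

lemma image_congr_board (hQ : Q ⊆ board n) {f g : ℕ × ℕ → ℕ × ℕ}
    (h : ∀ p : ℕ × ℕ, 1 ≤ p.1 → p.1 ≤ n → 1 ≤ p.2 → p.2 ≤ n → f p = g p) :
    Q.image f = Q.image g :=
  Finset.image_congr fun p hp => by
    have hb := mem_board'.1 (hQ hp)
    exact h p hb.1 hb.2.1 hb.2.2.1 hb.2.2.2

lemma image_id_board (hQ : Q ⊆ board n) {f : ℕ × ℕ → ℕ × ℕ}
    (h : ∀ p : ℕ × ℕ, 1 ≤ p.1 → p.1 ≤ n → 1 ≤ p.2 → p.2 ≤ n → f p = p) :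
    Q.image f = Q := by
  rw [image_congr_board hQ (g := id) h, Finset.image_id]

lemma sAct_subset (hQ : Q ⊆ board n) : sAct n Q ⊆ board n := by
  intro q hq
  simp only [sAct, Finset.mem_image] at hq
  obtain ⟨p, hp, rfl⟩ := hq
  have hb := mem_board'.1 (hQ hp)
  simp only [mem_board']
  omega

lemma rAct_subset (hQ : Q ⊆ board n) : rAct n Q ⊆ board n := by
  intro q hq
  simp only [rAct, Finset.mem_image] at hq
  obtain ⟨p, hp, rfl⟩ := hq
  have hb := mem_board'.1 (hQ hp)
  simp only [mem_board']
  omega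

lemma sAct_sAct (hQ : Q ⊆ board n) : sAct n (sAct n Q) = Q := by
  simp only [sAct, Finset.image_image]
  exact image_id_board hQ (by intro p h1 h2 h3 h4; simp [Prod.ext_iff]; all_goals omega)

-- r² as a single image
lemma rAct_rAct (hQ : Q ⊆ board n) :
    rAct n (rAct n Q) = Q.image (fun p => (n + 1 - p.1, n + 1 - p.2)) := by
  simp only [rAct, Finset.image_image]
  exact image_congr_board hQ (by intro p h1 h2 h3 h4; simp [Prod.ext_iff]; all_goals omega)

-- r⁴ = id
lemma rAct4 (hQ : Q ⊆ board n) :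
    rAct n (rAct n (rAct n (rAct n Q))) = Q := by
  simp only [rAct, Finset.image_image]
  exact image_id_board hQ (by intro p h1 h2 h3 h4; simp [Prod.ext_iff]; all_goals omega)

-- rs = transpose
lemma rAct_sAct_eq_transpose (hQ : Q ⊆ board n) :
    rAct n (sAct n Q) = Q.image (fun p => (p.2, p.1)) := by
  simp only [rAct, sAct, Finset.image_image]
  exact image_congr_board hQ (by intro p h1 h2 h3 h4; simp [Prod.ext_iff]; all_goals omega)

-- sr = anti-transpose
lemma sAct_rAct_eq_antitranspose (hQ : Q ⊆ board n) :
    sAct n (rAct n Q) = Q.image (fun p => (n + 1 - p.2, n + 1 - p.1)) := by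
  simp only [rAct, sAct, Finset.image_image]
  exact image_congr_board hQ (by intro p h1 h2 h3 h4; simp [Prod.ext_iff]; all_goals omega)

-- r² commutes with s
lemma rAct_rAct_sAct (hQ : Q ⊆ board n) :
    rAct n (rAct n (sAct n Q)) = sAct n (rAct n (rAct n Q)) := by
  simp only [rAct, sAct, Finset.image_image]
  exact image_congr_board hQ (by intro p h1 h2 h3 h4; simp [Prod.ext_iff]; all_goals omega)

-- srs = r³
lemma sAct_rAct_sAct (hQ : Q ⊆ board n) :
    sAct n (rAct n (sAct n Q)) = rAct n (rAct n (rAct n Q)) := by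
  simp only [rAct, sAct, Finset.image_image]
  exact image_congr_board hQ (by intro p h1 h2 h3 h4; simp [Prod.ext_iff]; all_goals omega)

-- sr = r³s
lemma sAct_rAct_eq (hQ : Q ⊆ board n) :
    sAct n (rAct n Q) = rAct n (rAct n (rAct n (sAct n Q))) := by
  simp only [rAct, sAct, Finset.image_image]
  exact image_congr_board hQ (by intro p h1 h2 h3 h4; simp [Prod.ext_iff]; all_goals omega)

end Helpers
section Preserve

variable {n : ℕ} {Q : Finset (ℕ × ℕ)}

lemma isQueensConfig_sAct (h : IsQueensConfig n Q) : IsQueensConfig n (sAct n Q) := by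
  obtain ⟨hsub, hcard, hrow, hcol, hdiag, hanti⟩ := h
  have hb : ∀ p ∈ Q, 1 ≤ p.1 ∧ p.1 ≤ n ∧ 1 ≤ p.2 ∧ p.2 ≤ n :=
    fun p hp => mem_board'.1 (hsub hp)
  refine ⟨sAct_subset hsub, ?_, ?_, ?_, ?_, ?_⟩
  · rw [sAct, Finset.card_image_of_injOn, hcard]
    intro p hp q hq hpq
    have h1 := hb p hp; have h2 := hb q hq
    simp only [Prod.ext_iff] at hpq ⊢
    omega
  · intro p' hp' q' hq' he
    simp only [sAct, Finset.mem_image] at hp' hq'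
    obtain ⟨p, hp, rfl⟩ := hp'; obtain ⟨q, hq, rfl⟩ := hq'
    have h1 := hb p hp; have h2 := hb q hq
    simp only at he
    rw [hrow p hp q hq he]
  · intro p' hp' q' hq' he
    simp only [sAct, Finset.mem_image] at hp' hq'
    obtain ⟨p, hp, rfl⟩ := hp'; obtain ⟨q, hq, rfl⟩ := hq'
    have h1 := hb p hp; have h2 := hb q hq
    simp only at he
    rw [hcol p hp q hq (by omega)]
  · intro p' hp' q' hq' he
    simp only [sAct, Finset.mem_image] at hp' hq'
    obtain ⟨p, hp, rfl⟩ := hp'; obtain ⟨q, hq, rfl⟩ := hq'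
    have h1 := hb p hp; have h2 := hb q hq
    simp only at he
    rw [hanti p hp q hq (by omega)]
  · intro p' hp' q' hq' he
    simp only [sAct, Finset.mem_image] at hp' hq'
    obtain ⟨p, hp, rfl⟩ := hp'; obtain ⟨q, hq, rfl⟩ := hq'
    have h1 := hb p hp; have h2 := hb q hq
    simp only at he
    rw [hdiag p hp q hq (by omega)]

lemma isQueensConfig_rAct (h : IsQueensConfig n Q) : IsQueensConfig n (rAct n Q) := by
  obtain ⟨hsub, hcard, hrow, hcol, hdiag, hanti⟩ := h
  have hb : ∀ p ∈ Q, 1 ≤ p.1 ∧ p.1 ≤ n ∧ 1 ≤ p.2 ∧ p.2 ≤ n :=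
    fun p hp => mem_board'.1 (hsub hp)
  refine ⟨rAct_subset hsub, ?_, ?_, ?_, ?_, ?_⟩
  · rw [rAct, Finset.card_image_of_injOn, hcard]
    intro p hp q hq hpq
    have h1 := hb p hp; have h2 := hb q hq
    simp only [Prod.ext_iff] at hpq ⊢
    omega
  · intro p' hp' q' hq' he
    simp only [rAct, Finset.mem_image] at hp' hq'
    obtain ⟨p, hp, rfl⟩ := hp'; obtain ⟨q, hq, rfl⟩ := hq'
    have h1 := hb p hp; have h2 := hb q hq
    simp only at he
    rw [hcol p hp q hq (by omega)]
  · intro p' hp' q' hq' he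
    simp only [rAct, Finset.mem_image] at hp' hq'
    obtain ⟨p, hp, rfl⟩ := hp'; obtain ⟨q, hq, rfl⟩ := hq'
    have h1 := hb p hp; have h2 := hb q hq
    simp only at he
    rw [hrow p hp q hq he]
  · intro p' hp' q' hq' he
    simp only [rAct, Finset.mem_image] at hp' hq'
    obtain ⟨p, hp, rfl⟩ := hp'; obtain ⟨q, hq, rfl⟩ := hq'
    have h1 := hb p hp; have h2 := hb q hq
    simp only at he
    rw [hanti p hp q hq (by omega)]
  · intro p' hp' q' hq' he
    simp only [rAct, Finset.mem_image] at hp' hq'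
    obtain ⟨p, hp, rfl⟩ := hp'; obtain ⟨q, hq, rfl⟩ := hq'
    have h1 := hb p hp; have h2 := hb q hq
    simp only at he
    rw [hdiag p hp q hq (by omega)]

end Preserve
section NoReflection

variable {n : ℕ} {Q : Finset (ℕ × ℕ)}

lemma sAct_ne (hn : 2 ≤ n) (h : IsQueensConfig n Q) : sAct n Q ≠ Q := by
  obtain ⟨hsub, hcard, hrow, hcol, hdiag, hanti⟩ := h
  intro hfix
  have hmem : ∀ p ∈ Q, (p.1, n + 1 - p.2) ∈ Q := by
    intro p hp
    rw [← hfix, sAct]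
    exact Finset.mem_image_of_mem _ hp
  have hhalf : ∀ p ∈ Q, p.2 + p.2 = n + 1 := by
    intro p hp
    have hb := mem_board'.1 (hsub hp)
    have h2 := hrow p hp _ (hmem p hp) rfl
    have := congrArg Prod.snd h2
    simp only at this
    omega
  obtain ⟨p, hp, q, hq, hpq⟩ := Finset.one_lt_card.1 (by omega : 1 < Q.card)
  have hc : p.2 ≠ q.2 := fun hc => hpq (hcol p hp q hq hc)
  have := hhalf p hp; have := hhalf q hq
  omega

lemma transpose_ne (hn : 2 ≤ n) (h : IsQueensConfig n Q)
    (hfix : Q.image (fun p => (p.2, p.1)) = Q) : False := by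
  obtain ⟨hsub, hcard, hrow, hcol, hdiag, hanti⟩ := h
  have hmem : ∀ p ∈ Q, ((p.2, p.1) : ℕ × ℕ) ∈ Q := by
    intro p hp; rw [← hfix]; exact Finset.mem_image_of_mem _ hp
  have hdg : ∀ p ∈ Q, p.1 = p.2 := by
    intro p hp
    have h2 := hanti p hp _ (hmem p hp) (by simp; omega)
    have := congrArg Prod.fst h2
    simpa using this
  obtain ⟨p, hp, q, hq, hpq⟩ := Finset.one_lt_card.1 (by omega : 1 < Q.card)
  have hbp := mem_board'.1 (hsub hp); have hbq := mem_board'.1 (hsub hq)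
  have h1 := hdg p hp; have h2 := hdg q hq
  exact hpq (hdiag p hp q hq (by omega))

lemma antitranspose_ne (hn : 2 ≤ n) (h : IsQueensConfig n Q)
    (hfix : Q.image (fun p => (n + 1 - p.2, n + 1 - p.1)) = Q) : False := by
  obtain ⟨hsub, hcard, hrow, hcol, hdiag, hanti⟩ := h
  have hmem : ∀ p ∈ Q, ((n + 1 - p.2, n + 1 - p.1) : ℕ × ℕ) ∈ Q := by
    intro p hp; rw [← hfix]; exact Finset.mem_image_of_mem _ hp
  have hdg : ∀ p ∈ Q, p.1 + p.2 = n + 1 := by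
    intro p hp
    have hbp := mem_board'.1 (hsub hp)
    have h2 := hdiag p hp _ (hmem p hp) (by simp; omega)
    have := congrArg Prod.fst h2
    simp only at this
    omega
  obtain ⟨p, hp, q, hq, hpq⟩ := Finset.one_lt_card.1 (by omega : 1 < Q.card)
  have hbp := mem_board'.1 (hsub hp); have hbq := mem_board'.1 (hsub hq)
  have h1 := hdg p hp; have h2 := hdg q hq
  exact hpq (hanti p hp q hq (by omega))

end NoReflection
section Orbits

variable {n : ℕ} {Q : Finset (ℕ × ℕ)}


lemma quad_perm1 {α : Type*} [DecidableEq α] (a b c d : α) :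
    ({b, a, d, c} : Finset α) = {a, b, c, d} := by
  ext x; simp only [Finset.mem_insert, Finset.mem_singleton]; tauto

lemma quad_perm2 {α : Type*} [DecidableEq α] (a b c d : α) :
    ({c, d, a, b} : Finset α) = {a, b, c, d} := by
  ext x; simp only [Finset.mem_insert, Finset.mem_singleton]; tauto

lemma quad_perm3 {α : Type*} [DecidableEq α] (a b c d : α) :
    ({d, c, b, a} : Finset α) = {a, b, c, d} := by
  ext x; simp only [Finset.mem_insert, Finset.mem_singleton]; tauto

lemma mem_Fr2 : Q ∈ Fr2 n ↔
    IsQueensConfig n Q ∧ rAct n (rAct n Q) = Q ∧ rAct n Q ≠ Q := by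
  simp only [Fr2, Finset.mem_filter, Finset.mem_powerset]
  exact ⟨fun h => h.2, fun h => ⟨h.1.1, h⟩⟩

lemma sAct_rAct_comm (hsub : Q ⊆ board n) (hr2 : rAct n (rAct n Q) = Q) :
    sAct n (rAct n Q) = rAct n (sAct n Q) := by
  rw [sAct_rAct_eq hsub, rAct_rAct_sAct hsub, hr2]

lemma mem_d4Orbit_self : Q ∈ d4Orbit n Q :=
  Finset.mem_image.2 ⟨((0 : Fin 4), false), Finset.mem_univ _, rfl⟩

lemma d4Orbit_eq (hsub : Q ⊆ board n) (hr2 : rAct n (rAct n Q) = Q) :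
    d4Orbit n Q = {Q, rAct n Q, sAct n Q, rAct n (sAct n Q)} := by
  have hr2s : rAct n (rAct n (sAct n Q)) = sAct n Q := by
    rw [rAct_rAct_sAct hsub, hr2]
  have huniv : (Finset.univ : Finset (Fin 4 × Bool)) =
      {((0:Fin 4),false),((1:Fin 4),false),((2:Fin 4),false),((3:Fin 4),false),
       ((0:Fin 4),true),((1:Fin 4),true),((2:Fin 4),true),((3:Fin 4),true)} := by decide
  have e0 : d4Act n ((0:Fin 4), false) Q = Q := rfl
  have e1 : d4Act n ((1:Fin 4), false) Q = rAct n Q := rfl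
  have e2 : d4Act n ((2:Fin 4), false) Q = Q := hr2
  have e3 : d4Act n ((3:Fin 4), false) Q = rAct n Q := by
    show rAct n (rAct n (rAct n Q)) = rAct n Q
    rw [hr2]
  have e4 : d4Act n ((0:Fin 4), true) Q = sAct n Q := rfl
  have e5 : d4Act n ((1:Fin 4), true) Q = rAct n (sAct n Q) := rfl
  have e6 : d4Act n ((2:Fin 4), true) Q = sAct n Q := hr2s
  have e7 : d4Act n ((3:Fin 4), true) Q = rAct n (sAct n Q) := by
    show rAct n (rAct n (rAct n (sAct n Q))) = rAct n (sAct n Q)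
    rw [hr2s]
  rw [d4Orbit, huniv]
  simp only [Finset.image_insert, Finset.image_singleton, e0, e1, e2, e3, e4, e5, e6, e7]
  ext X
  simp only [Finset.mem_insert, Finset.mem_singleton]
  tauto

lemma d4Orbit_card (hn : 2 ≤ n) (h : Q ∈ Fr2 n) : (d4Orbit n Q).card = 4 := by
  obtain ⟨hq, hr2, hr1⟩ := mem_Fr2.1 h
  have hsub : Q ⊆ board n := hq.1
  have hr2s : rAct n (rAct n (sAct n Q)) = sAct n Q := by
    rw [rAct_rAct_sAct hsub, hr2]
  have d2 : sAct n Q ≠ Q := sAct_ne hn hq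
  have d3 : rAct n (sAct n Q) ≠ Q := fun he =>
    transpose_ne hn hq (by rw [← rAct_sAct_eq_transpose hsub]; exact he)
  have d4 : rAct n Q ≠ sAct n Q := fun he =>
    antitranspose_ne hn hq
      (by rw [← sAct_rAct_eq_antitranspose hsub, he, sAct_sAct hsub])
  have d5 : rAct n Q ≠ rAct n (sAct n Q) := by
    intro he
    have h1 := congrArg (fun X => rAct n (rAct n (rAct n X))) he
    rw [rAct4 hsub, rAct4 (sAct_subset hsub)] at h1
    exact d2 h1.symm
  have d6 : sAct n Q ≠ rAct n (sAct n Q) := by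
    intro he
    have h1 := congrArg (sAct n) he
    rw [sAct_sAct hsub, sAct_rAct_sAct hsub] at h1
    have h2 := congrArg (rAct n) h1
    rw [rAct4 hsub] at h2
    exact hr1 h2
  rw [d4Orbit_eq hsub hr2]
  rw [Finset.card_insert_of_notMem (by
        simp only [Finset.mem_insert, Finset.mem_singleton]
        push_neg
        exact ⟨Ne.symm hr1, Ne.symm d2, Ne.symm d3⟩),
      Finset.card_insert_of_notMem (by
        simp only [Finset.mem_insert, Finset.mem_singleton]
        push_neg
        exact ⟨d4, d5⟩),
      Finset.card_insert_of_notMem (by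
        simp only [Finset.mem_singleton]
        exact d6),
      Finset.card_singleton]

lemma orbit_invariant (h : Q ∈ Fr2 n) :
    ∀ X ∈ d4Orbit n Q, X ∈ Fr2 n ∧ d4Orbit n X = d4Orbit n Q := by
  obtain ⟨hq, hr2, hr1⟩ := mem_Fr2.1 h
  have hsub : Q ⊆ board n := hq.1
  have hssub := sAct_subset (n := n) hsub
  have hr2s : rAct n (rAct n (sAct n Q)) = sAct n Q := by
    rw [rAct_rAct_sAct hsub, hr2]
  have hsr : sAct n (rAct n Q) = rAct n (sAct n Q) := sAct_rAct_comm hsub hr2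
  have d6 : sAct n Q ≠ rAct n (sAct n Q) := by
    intro he
    have h1 := congrArg (sAct n) he
    rw [sAct_sAct hsub, sAct_rAct_sAct hsub] at h1
    have h2 := congrArg (rAct n) h1
    rw [rAct4 hsub] at h2
    exact hr1 h2
  have hrQ : rAct n Q ∈ Fr2 n := mem_Fr2.2
    ⟨isQueensConfig_rAct hq, by rw [hr2], by rw [hr2]; exact Ne.symm hr1⟩
  have hsQ : sAct n Q ∈ Fr2 n := mem_Fr2.2
    ⟨isQueensConfig_sAct hq, hr2s, Ne.symm d6⟩
  have hrsQ : rAct n (sAct n Q) ∈ Fr2 n := mem_Fr2.2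
    ⟨isQueensConfig_rAct (isQueensConfig_sAct hq), by rw [hr2s], by rw [hr2s]; exact d6⟩
  intro X hX
  rw [d4Orbit_eq hsub hr2] at hX
  simp only [Finset.mem_insert, Finset.mem_singleton] at hX
  rcases hX with rfl | rfl | rfl | rfl
  · exact ⟨h, rfl⟩
  · refine ⟨hrQ, ?_⟩
    rw [d4Orbit_eq (rAct_subset hsub) (by rw [hr2]), hr2, hsr,
        d4Orbit_eq hsub hr2]
    rw [hr2s]
    exact quad_perm1 _ _ _ _
  · refine ⟨hsQ, ?_⟩
    rw [d4Orbit_eq hssub hr2s, sAct_sAct hsub, d4Orbit_eq hsub hr2]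
    exact quad_perm2 _ _ _ _
  · refine ⟨hrsQ, ?_⟩
    rw [d4Orbit_eq (rAct_subset hssub) (by rw [hr2s]), hr2s]
    have h1 : sAct n (rAct n (sAct n Q)) = rAct n Q := by
      rw [sAct_rAct_comm hssub hr2s, sAct_sAct hsub]
    rw [h1, hr2, d4Orbit_eq hsub hr2]
    exact quad_perm3 _ _ _ _

end Orbits
/-- For `n ≥ 2`, the cardinality of `F_{r²∖r}` equals four times the number of
`D₄`-orbits contained in `F_{r²∖r}`; every `D₄`-orbit of a configuration in
`F_{r²∖r}` has exactly four elements, and `4` divides its cardinality. -/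
theorem Fr2_card_eq_four_mul_orbits (n : ℕ) (hn : 2 ≤ n) :
    (Fr2 n).card = 4 * ((Fr2 n).image (fun Q => d4Orbit n Q)).card ∧
    (∀ Q ∈ Fr2 n, (d4Orbit n Q).card = 4) ∧
    4 ∣ (Fr2 n).card := by
  have horb : ∀ Q ∈ Fr2 n, (d4Orbit n Q).card = 4 := fun Q hQ => d4Orbit_card hn hQ
  have hmain : (Fr2 n).card = 4 * ((Fr2 n).image (fun Q => d4Orbit n Q)).card := by
    rw [Finset.card_eq_sum_card_fiberwise
      (f := fun Q => d4Orbit n Q) (t := (Fr2 n).image (fun Q => d4Orbit n Q))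
      (fun Q hQ => Finset.mem_image_of_mem _ hQ)]
    have key : ∀ O ∈ (Fr2 n).image (fun Q => d4Orbit n Q),
        ((Fr2 n).filter (fun Q => d4Orbit n Q = O)).card = 4 := by
      intro O hO
      obtain ⟨Q₀, hQ₀, rfl⟩ := Finset.mem_image.1 hO
      have hfib : (Fr2 n).filter (fun Q => d4Orbit n Q = d4Orbit n Q₀) = d4Orbit n Q₀ := by
        ext X
        simp only [Finset.mem_filter]
        constructor
        · rintro ⟨hX, hEq⟩
          rw [← hEq]
          exact mem_d4Orbit_self
        · intro hX
          exact orbit_invariant hQ₀ X hX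
      rw [hfib]
      exact horb Q₀ hQ₀
    rw [Finset.sum_congr rfl key, Finset.sum_const, smul_eq_mul, mul_comm]
  exact ⟨hmain, horb, hmain ▸ Dvd.intro _ rfl⟩
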